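/- arXiv:2311.11114 — 2 statements merged into one kernel-verified Lean document; each statement's English description precedes it below -/
import Mathlib

section
/- Fix K : ℕ and weights v : Fin K → ℕ, let total := ∑_{k : Fin K} v k, and let j* be the greatest natural number j such that j ≤ total / 2 (floor division) and some finite subset S ⊆ Fin K satisfies ∑_{k ∈ S} v k = j (such a greatest j exists, since j = 0 is achievable by the empty set and the set of achievable j ≤ total/2 is finite). Then the quantity δ := total − 2·j* satisfies: (i) for every finite subset S ⊆ Fin K, |(total : ℤ) − 2·(∑_{k ∈ S} v k : ℤ)| ≥ δ, and (ii) there exists a finite subset S ⊆ Fin K with |(total : ℤ) − 2·(∑_{k ∈ S} v k : ℤ)| = δ. Hence δ = δ(v), the minimal partition difference: traversing j in reverse order from ⌊total/2⌋ until a feasible j is found yields the optimal invariance threshold δ_v = total − 2j. -/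
/-- Optimality of the dynamic program in Proposition 2: with `jstar` the greatest
achievable subset sum `≤ total / 2`, the quantity `δ = total − 2·jstar` is the minimal
partition difference: it lower-bounds `|total − 2·∑_{k∈S} v k|` for every subset `S`,
and is attained by some subset. -/
theorem partition_difference_optimal (K : ℕ) (v : Fin K → ℕ)
    (total : ℕ) (htotal : total = ∑ k, v k)
    (jstar : ℕ)
    (hle : jstar ≤ total / 2)
    (hach : ∃ S : Finset (Fin K), ∑ k ∈ S, v k = jstar)
    (hmax : ∀ j : ℕ, j ≤ total / 2 → (∃ S : Finset (Fin K), ∑ k ∈ S, v k = j) → j ≤ jstar)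
    (δ : ℕ) (hδ : δ = total - 2 * jstar) :
    (∀ S : Finset (Fin K), (δ : ℤ) ≤ |(total : ℤ) - 2 * ((∑ k ∈ S, v k : ℕ) : ℤ)|) ∧
    (∃ S : Finset (Fin K), |(total : ℤ) - 2 * ((∑ k ∈ S, v k : ℕ) : ℤ)| = (δ : ℤ)) := by
  constructor
  · intro S
    set s := ∑ k ∈ S, v k with hs
    have hsle : s ≤ total := by
      rw [htotal, hs]
      exact Finset.sum_le_sum_of_subset (Finset.subset_univ S)
    have hcompl : ∑ k ∈ Sᶜ, v k = total - s := by
      have := Finset.sum_add_sum_compl S v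
      omega
    rcases le_or_gt s (total / 2) with h | h
    · have := hmax s h ⟨S, rfl⟩
      rw [abs_of_nonneg (by push_cast; omega)]
      push_cast; omega
    · have h2 : total - s ≤ total / 2 := by omega
      have := hmax (total - s) h2 ⟨Sᶜ, hcompl⟩
      rw [abs_of_nonpos (by push_cast; omega)]
      push_cast; omega
  · obtain ⟨S, hS⟩ := hach
    refine ⟨S, ?_⟩
    rw [hS, abs_of_nonneg (by push_cast; omega)]
    push_cast; omega
end

section
/- Fix K : ℕ and weights v : Fin K → ℕ, and suppose Fin K is partitioned into two disjoint finite subsets A and B with A ∪ B = Fin K. Let δ_A be the minimum over finite subsets S ⊆ A of |(∑_{k ∈ A} v k : ℤ) − 2·(∑_{k ∈ S} v k : ℤ)|, let δ_B be the analogous minimum for B, and let δ(v) be the minimal partition difference of the whole family. Then δ(v) ≤ |δ_A − δ_B|: combining an optimal two-subset split of A with an optimal two-subset split of B (pairing the heavier side of one with the lighter side of the other) yields a split of Fin K whose parts' sums differ by exactly |δ_A − δ_B|. -/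
/-! The signed imbalance `∑ s f - 2 ∑ S f` of the split of `s` into `S` and `s \ S` changes
sign when the two sides are swapped, and imbalances of splits of disjoint families add up.
Orienting optimal splits of `A` and `B` so that their imbalances are `δA` and `-δB`, their
union is a split of the whole family with imbalance `δA - δB`. -/

open Finset

namespace Finset

variable {ι R : Type*} [DecidableEq ι] [CommRing R]

def splitImbalance (f : ι → R) (s S : Finset ι) : R :=
  ∑ k ∈ s, f k - 2 * ∑ k ∈ S, f k

theorem splitImbalance_sdiff (f : ι → R) {s S : Finset ι} (h : S ⊆ s) :
    splitImbalance f s (s \ S) = -splitImbalance f s S := by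
  rw [splitImbalance, splitImbalance, sum_sdiff_eq_sub h]
  ring

theorem splitImbalance_union (f : ι → R) {s t S T : Finset ι} (hst : Disjoint s t)
    (hS : S ⊆ s) (hT : T ⊆ t) :
    splitImbalance f (s ∪ t) (S ∪ T) = splitImbalance f s S + splitImbalance f t T := by
  rw [splitImbalance, splitImbalance, splitImbalance, sum_union hst,
    sum_union (hst.mono hS hT)]
  ring

theorem exists_subset_splitImbalance_eq_abs [LinearOrder R] (f : ι → R) {s S : Finset ι}
    (h : S ⊆ s) : ∃ S' ⊆ s, splitImbalance f s S' = |splitImbalance f s S| := by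
  rcases abs_choice (splitImbalance f s S) with habs | habs
  · exact ⟨S, h, habs.symm⟩
  · exact ⟨s \ S, sdiff_subset, by rw [splitImbalance_sdiff f h, habs]⟩

end Finset

theorem partition_difference_substructure_general (K : ℕ) (v : Fin K → ℕ)
    (A B : Finset (Fin K)) (hdisj : Disjoint A B) (hunion : A ∪ B = Finset.univ)
    (δA : ℤ)
    (hA_att : ∃ S ⊆ A, |(∑ k ∈ A, v k : ℤ) - 2 * ((∑ k ∈ S, v k : ℕ) : ℤ)| = δA)
    (δB : ℤ)
    (hB_att : ∃ S ⊆ B, |(∑ k ∈ B, v k : ℤ) - 2 * ((∑ k ∈ S, v k : ℕ) : ℤ)| = δB)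
    (δ : ℤ)
    (hδ_lb : ∀ S : Finset (Fin K),
      δ ≤ |((∑ k, v k : ℕ) : ℤ) - 2 * ((∑ k ∈ S, v k : ℕ) : ℤ)|) :
    δ ≤ |δA - δB| := by
  let w : Fin K → ℤ := fun k => v k
  obtain ⟨SA₀, hSA₀, hδA⟩ := hA_att
  obtain ⟨SB₀, hSB₀, hδB⟩ := hB_att
  obtain ⟨SA, hSA, hA⟩ := exists_subset_splitImbalance_eq_abs w hSA₀
  obtain ⟨SB, hSB, hB⟩ := exists_subset_splitImbalance_eq_abs w hSB₀
  push_cast at hδA hδB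
  have hsplit : splitImbalance w univ (SA ∪ (B \ SB)) = δA - δB := by
    rw [← hunion, splitImbalance_union w hdisj hSA sdiff_subset, splitImbalance_sdiff w hSB,
      hA, hB, ← hδA, ← hδB, sub_eq_add_neg]
    rfl
  calc δ ≤ |splitImbalance w univ (SA ∪ (B \ SB))| := by
        simpa [splitImbalance, w] using hδ_lb (SA ∪ (B \ SB))
    _ = |δA - δB| := by rw [hsplit]

/-- Optimal substructure lemma from the proof of Proposition 2: if `Fin K` is
partitioned into `A` and `B`, and `δA`, `δB` are the minimal two-subset partition
differences of `A` and `B` respectively, while `δ` is the minimal partition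
difference of the whole family, then `δ ≤ |δA − δB|`. -/
theorem partition_difference_substructure (K : ℕ) (v : Fin K → ℕ)
    (A B : Finset (Fin K)) (hdisj : Disjoint A B) (hunion : A ∪ B = Finset.univ)
    (δA : ℤ)
    (hA_lb : ∀ S ⊆ A, δA ≤ |(∑ k ∈ A, v k : ℤ) - 2 * ((∑ k ∈ S, v k : ℕ) : ℤ)|)
    (hA_att : ∃ S ⊆ A, |(∑ k ∈ A, v k : ℤ) - 2 * ((∑ k ∈ S, v k : ℕ) : ℤ)| = δA)
    (δB : ℤ)
    (hB_lb : ∀ S ⊆ B, δB ≤ |(∑ k ∈ B, v k : ℤ) - 2 * ((∑ k ∈ S, v k : ℕ) : ℤ)|)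
    (hB_att : ∃ S ⊆ B, |(∑ k ∈ B, v k : ℤ) - 2 * ((∑ k ∈ S, v k : ℕ) : ℤ)| = δB)
    (δ : ℤ)
    (hδ_lb : ∀ S : Finset (Fin K),
      δ ≤ |((∑ k, v k : ℕ) : ℤ) - 2 * ((∑ k ∈ S, v k : ℕ) : ℤ)|)
    (hδ_att : ∃ S : Finset (Fin K),
      |((∑ k, v k : ℕ) : ℤ) - 2 * ((∑ k ∈ S, v k : ℕ) : ℤ)| = δ) :
    δ ≤ |δA - δB| :=
  partition_difference_substructure_general K v A B hdisj hunion δA hA_att δB hB_att δ hδ_lb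
end
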